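/- Let n ≥ 1. The duality map F : Bⁿ → ℂⁿ, F(z) = z/√(1 − ‖z‖²), satisfies F*ω₊ = ω₀; that is, for all z ∈ Bⁿ and all u, v ∈ ℂⁿ, ω₊(F(z))(DF(z)u, DF(z)v) = ω₀(u,v). -/

import Mathlib

/-!
With `t = 1 - ‖z‖²` and `a = t^(-1/2)` we have `F z = a z`, and differentiating `a` as a function
of `‖z‖²` gives `DF(z) u = a (u + r z)` with `r t = Re ⟪z, u⟫`. Since `1 + ‖F z‖² = a²`, the
scalar `a` cancels completely from `ω₊(F z)(DF u, DF v)`, leaving `Im (⟪X, Y⟫ - ⟪X, z⟫⟪z, Y⟫)`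
for `X = u + r z`, `Y = v + s z`. Expanding, the radial corrections contribute
`Re ⟪u, z⟫ Im ⟪z, v⟫ + Im ⟪u, z⟫ Re ⟪z, v⟫`, which is exactly the imaginary part of
`⟪u, z⟫⟪z, v⟫`, so only `Im ⟪u, v⟫ = ω₀(u, v)` survives.
-/

open Complex Set

noncomputable section

/-- The open unit ball in `ℂⁿ` (with the standard Hermitian norm). -/
def unitBall (n : ℕ) : Set (EuclideanSpace ℂ (Fin n)) := {z | ‖z‖ < 1}

/-- The standard Hermitian inner product `⟪u,v⟫ = Σⱼ conj uⱼ * vⱼ` on `ℂⁿ`. -/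
def hermInner {n : ℕ} (u v : EuclideanSpace ℂ (Fin n)) : ℂ := inner ℂ u v

/-- The flat symplectic form `ω₀(u,v) = Im ⟪u,v⟫` on `ℂⁿ`. -/
def omega0 {n : ℕ} (u v : EuclideanSpace ℂ (Fin n)) : ℝ := (hermInner u v).im

/-- The hyperbolic symplectic form on the unit ball:
`ω₋(z)(u,v) = Im (((1 - ‖z‖²)·⟪u,v⟫ + ⟪u,z⟫·⟪z,v⟫) / (1 - ‖z‖²)²)`. -/
def omegaMinus {n : ℕ} (z u v : EuclideanSpace ℂ (Fin n)) : ℝ :=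
  (((((1 : ℝ) - ‖z‖ ^ 2 : ℝ) : ℂ) * hermInner u v + hermInner u z * hermInner z v) /
    ((((1 : ℝ) - ‖z‖ ^ 2 : ℝ) : ℂ)) ^ 2).im

/-- The Bergman operator of the unit ball at `z`:
`B(z,z)v = (1 - ‖z‖²)·(v - ⟪z,v⟫·z)`. -/
def bergman {n : ℕ} (z v : EuclideanSpace ℂ (Fin n)) : EuclideanSpace ℂ (Fin n) :=
  ((((1 : ℝ) - ‖z‖ ^ 2 : ℝ) : ℂ)) • (v - hermInner z v • z)

/-- `f` is a smooth diffeomorphism of `s` onto `t`: it is `C^∞` on `s`, maps `s` to `t`,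
and has a `C^∞` inverse mapping `t` to `s`. -/
def IsSmoothDiffeoOn {E F : Type*} [NormedAddCommGroup E] [NormedSpace ℝ E]
    [NormedAddCommGroup F] [NormedSpace ℝ F] (f : E → F) (s : Set E) (t : Set F) : Prop :=
  ContDiffOn ℝ (⊤ : ℕ∞) f s ∧ Set.MapsTo f s t ∧
    ∃ g : F → E, ContDiffOn ℝ (⊤ : ℕ∞) g t ∧ Set.MapsTo g t s ∧ Set.InvOn g f s t

/-- The Fubini-Study form on `ℂⁿ`:
`ω₊(z)(u,v) = Im (((1 + ‖z‖²)·⟪u,v⟫ - ⟪u,z⟫·⟪z,v⟫) / (1 + ‖z‖²)²)`. -/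
def omegaPlus {n : ℕ} (z u v : EuclideanSpace ℂ (Fin n)) : ℝ :=
  (((((1 : ℝ) + ‖z‖ ^ 2 : ℝ) : ℂ) * hermInner u v - hermInner u z * hermInner z v) /
    ((((1 : ℝ) + ‖z‖ ^ 2 : ℝ) : ℂ)) ^ 2).im

/-- The duality map of the unit ball: `F(z) = z / √(1 - ‖z‖²)`. -/
def dualityMap {n : ℕ} (z : EuclideanSpace ℂ (Fin n)) : EuclideanSpace ℂ (Fin n) :=
  (Real.sqrt (1 - ‖z‖ ^ 2))⁻¹ • z

lemma HasDerivAt.hasFDerivAt_smul_norm_sq {E : Type*} [NormedAddCommGroup E]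
    [InnerProductSpace ℝ E] {φ : ℝ → ℝ} {φ' : ℝ} {z : E} (hφ : HasDerivAt φ φ' (‖z‖ ^ 2)) :
    HasFDerivAt (fun w : E => φ (‖w‖ ^ 2) • w)
      (φ (‖z‖ ^ 2) • ContinuousLinearMap.id ℝ E + ((2 * φ') • innerSL ℝ z).smulRight z) z := by
  have h := (hφ.comp_hasFDerivAt z (hasStrictFDerivAt_norm_sq z).hasFDerivAt).smul
    (hasFDerivAt_id z)
  refine h.congr_fderiv ?_
  rw [Function.comp_apply, id, mul_smul, smul_comm, two_smul, two_smul]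

lemma hasDerivAt_inv_sqrt_one_sub {x : ℝ} (hx : x < 1) :
    HasDerivAt (fun y => (√(1 - y))⁻¹) ((√(1 - x))⁻¹ * (1 - x)⁻¹ / 2) x := by
  have hpos : 0 < 1 - x := by linarith
  have hsqrt : 0 < √(1 - x) := Real.sqrt_pos.mpr hpos
  have h := (((hasDerivAt_id x).const_sub 1).sqrt hpos.ne').inv hsqrt.ne'
  refine h.congr_deriv ?_
  have hsq : √(1 - x) ^ 2 = 1 - x := Real.sq_sqrt hpos.le
  simp only [id]
  field_simp
  exact hsq.symm

section

variable {n : ℕ}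

lemma fderiv_dualityMap_apply {z : EuclideanSpace ℂ (Fin n)} (hz : ‖z‖ < 1)
    (u : EuclideanSpace ℂ (Fin n)) :
    fderiv ℝ dualityMap z u =
      (√(1 - ‖z‖ ^ 2))⁻¹ • (u + ((1 - ‖z‖ ^ 2)⁻¹ * inner ℝ z u) • z) := by
  have hz2 : ‖z‖ ^ 2 < 1 := by nlinarith [norm_nonneg z]
  have hF : HasFDerivAt (dualityMap (n := n)) _ z :=
    (hasDerivAt_inv_sqrt_one_sub hz2).hasFDerivAt_smul_norm_sq
  rw [hF.fderiv]
  simp only [add_apply, smul_apply, ContinuousLinearMap.id_apply,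
    ContinuousLinearMap.smulRight_apply, innerSL_apply_apply, smul_add, smul_smul, smul_eq_mul]
  ring_nf

lemma hermInner_add_left (x y w : EuclideanSpace ℂ (Fin n)) :
    hermInner (x + y) w = hermInner x w + hermInner y w := inner_add_left x y w

lemma hermInner_add_right (x y w : EuclideanSpace ℂ (Fin n)) :
    hermInner x (y + w) = hermInner x y + hermInner x w := inner_add_right x y w

lemma hermInner_real_smul_left (r : ℝ) (x y : EuclideanSpace ℂ (Fin n)) :
    hermInner (r • x) y = r * hermInner x y := by
  rw [hermInner, hermInner, RCLike.real_smul_eq_coe_smul (K := ℂ), inner_smul_left]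
  simp

lemma hermInner_real_smul_right (r : ℝ) (x y : EuclideanSpace ℂ (Fin n)) :
    hermInner x (r • y) = r * hermInner x y := by
  rw [hermInner, hermInner, RCLike.real_smul_eq_coe_smul (K := ℂ), inner_smul_right]
  simp

lemma hermInner_self (z : EuclideanSpace ℂ (Fin n)) : hermInner z z = ((‖z‖ ^ 2 : ℝ) : ℂ) := by
  simp [hermInner, inner_self_eq_norm_sq_to_K]

-- The real inner product on `EuclideanSpace ℂ (Fin n)` is the componentwise one of `PiLp`, not
-- `Inner.rclikeToReal`, so `real_inner_eq_re_inner` does not apply.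
lemma re_hermInner (x y : EuclideanSpace ℂ (Fin n)) : (hermInner x y).re = inner ℝ x y := by
  simp [hermInner, PiLp.inner_apply, Complex.inner]

lemma omegaPlus_smul_smul_smul {a : ℝ} {z : EuclideanSpace ℂ (Fin n)}
    (ha : a ^ 2 * (1 - ‖z‖ ^ 2) = 1) (X Y : EuclideanSpace ℂ (Fin n)) :
    omegaPlus (a • z) (a • X) (a • Y) = (hermInner X Y - hermInner X z * hermInner z Y).im := by
  have hnorm : 1 + ‖a • z‖ ^ 2 = a ^ 2 := by
    rw [norm_smul, mul_pow, Real.norm_eq_abs, sq_abs]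
    linarith
  have ha0 : (a : ℂ) ≠ 0 := by
    rintro h
    simp_all
  rw [omegaPlus, hnorm]
  simp only [hermInner_real_smul_left, hermInner_real_smul_right]
  congr 1
  push_cast
  field_simp

lemma im_hermInner_add_smul_sub_mul {z u v : EuclideanSpace ℂ (Fin n)} {r s : ℝ}
    (hr : r * (1 - ‖z‖ ^ 2) = inner ℝ z u) (hs : s * (1 - ‖z‖ ^ 2) = inner ℝ z v) :
    (hermInner (u + r • z) (v + s • z) - hermInner (u + r • z) z * hermInner z (v + s • z)).im
      = omega0 u v := by
  rw [← re_hermInner] at hr hs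
  rw [hermInner, ← inner_conj_symm, Complex.conj_re, ← hermInner] at hr
  simp only [hermInner_add_left, hermInner_add_right, hermInner_real_smul_left,
    hermInner_real_smul_right, hermInner_self, omega0, Complex.sub_im, Complex.add_im,
    Complex.mul_im, Complex.add_re, Complex.mul_re, Complex.ofReal_re, Complex.ofReal_im]
  linear_combination (hermInner z v).im * hr + (hermInner u z).im * hs

end

theorem ball_dualityMap_pullback_fubiniStudy_eq_flat_general (n : ℕ) :
    ∀ z ∈ unitBall n, ∀ u v : EuclideanSpace ℂ (Fin n),
      omegaPlus (dualityMap z) (fderiv ℝ dualityMap z u) (fderiv ℝ dualityMap z v)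
        = omega0 u v := by
  intro z (hz : ‖z‖ < 1) u v
  have ht : 0 < 1 - ‖z‖ ^ 2 := by nlinarith [norm_nonneg z]
  have ha : (√(1 - ‖z‖ ^ 2))⁻¹ ^ 2 * (1 - ‖z‖ ^ 2) = 1 := by
    rw [inv_pow, Real.sq_sqrt ht.le, inv_mul_cancel₀ ht.ne']
  rw [fderiv_dualityMap_apply hz, fderiv_dualityMap_apply hz, dualityMap,
    omegaPlus_smul_smul_smul ha]
  exact im_hermInner_add_smul_sub_mul (by field_simp) (by field_simp)

/-- The duality map of the unit ball pulls the Fubini-Study form back to the flat form: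
`F*ω₊ = ω₀`. -/
theorem ball_dualityMap_pullback_fubiniStudy_eq_flat (n : ℕ) (hn : 1 ≤ n) :
    ∀ z ∈ unitBall n, ∀ u v : EuclideanSpace ℂ (Fin n),
      omegaPlus (dualityMap z) (fderiv ℝ dualityMap z u) (fderiv ℝ dualityMap z v)
        = omega0 u v :=
  ball_dualityMap_pullback_fubiniStudy_eq_flat_general n
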